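/- arXiv:1801.08889 — 5 statements merged into one kernel-verified Lean document; each statement's English description precedes it below -/
import Mathlib

section
/- For k > 0, the 3×3 complex matrix M = [[1, -cos k, 0], [0, cos k, -cos k], [i, sin k, sin k]] is invertible if and only if k is not of the form (2n+1)π/2 for some natural number n. -/
open Complex Real Matrix

/-! det M = cos k · (2 sin k + i cos k), and the second factor has imaginary part cos k, so M is
singular exactly when cos k = 0; for k > 0 those zeros are the odd multiples of π/2. -/

theorem det_kirchhoff_matrix {R : Type*} [CommRing R] (c s z : R) :
    det !![1, -c, 0; 0, c, -c; z, s, s] = c * (2 * s + c * z) := by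
  simp [det_fin_three]
  ring

theorem ofReal_mul_two_mul_add_mul_I_eq_zero_iff (c s : ℝ) :
    (c : ℂ) * (2 * s + c * I) = 0 ↔ c = 0 := by
  refine ⟨fun h => ?_, fun h => by simp [h]⟩
  rcases mul_eq_zero.mp h with hc | hsum
  · exact_mod_cast hc
  · simpa using congrArg Complex.im hsum

theorem Real.cos_eq_zero_iff_of_pos {k : ℝ} (hk : 0 < k) :
    Real.cos k = 0 ↔ ∃ n : ℕ, k = (2 * n + 1) * π / 2 := by
  rw [Real.cos_eq_zero_iff]
  constructor
  · rintro ⟨m, rfl⟩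
    have hm : 0 ≤ m := by
      by_contra! hm
      have : (2 * m + 1 : ℝ) < 0 := by exact_mod_cast (by omega : 2 * m + 1 < 0)
      nlinarith [pi_pos]
    lift m to ℕ using hm
    exact ⟨m, by push_cast; ring⟩
  · rintro ⟨n, rfl⟩
    exact ⟨n, by push_cast; ring⟩

theorem M_invertible_iff (k : ℝ) (hk : 0 < k) :
    IsUnit (!![(1 : ℂ), -Real.cos k, 0;
               0, Real.cos k, -Real.cos k;
               Complex.I, Real.sin k, Real.sin k]) ↔
      ¬ ∃ n : ℕ, k = (2 * n + 1) * Real.pi / 2 := by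
  rw [isUnit_iff_isUnit_det, isUnit_iff_ne_zero, ne_eq, det_kirchhoff_matrix,
    ofReal_mul_two_mul_add_mul_I_eq_zero_iff, Real.cos_eq_zero_iff_of_pos hk]
end

section
/- If k = (2n+1)π/2 for some n ∈ ℕ, then the vector (R, A, B) = (-1, 0, 0) need not be the only solution: the kernel of M = [[1, -cos k, 0], [0, cos k, -cos k], [i, sin k, sin k]] is one-dimensional, spanned by (0, 1, -1). -/
open Complex Real Matrix

/-! At `k = (2n+1)π/2` we have `cos k = 0` and `sin k = ±1`, so `M` has rows `(1, 0, 0)`, `0` and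
`(i, sin k, sin k)`: its kernel is cut out by `R = 0` and `A + B = 0`. -/

theorem mulVec_eq_zero_iff_exists_smul {K : Type*} [Field K] {a s : K} (hs : s ≠ 0)
    (v : Fin 3 → K) :
    !![1, 0, 0; 0, 0, 0; a, s, s] *ᵥ v = 0 ↔ ∃ c : K, v = c • ![0, 1, -1] := by
  constructor
  · intro h
    have h0 : v 0 = 0 := by simpa [mulVec, dotProduct, Fin.sum_univ_three] using congrFun h 0
    have h2 : s * (v 1 + v 2) = 0 := by
      have := congrFun h 2
      simp [mulVec, dotProduct, Fin.sum_univ_three, h0] at this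
      linear_combination this
    have h12 : v 1 + v 2 = 0 := (mul_eq_zero.mp h2).resolve_left hs
    refine ⟨v 1, ?_⟩
    ext i
    fin_cases i
    · simpa using h0
    · simp
    · simp
      linear_combination h12
  · rintro ⟨c, rfl⟩
    ext i
    fin_cases i <;> simp [mulVec, dotProduct, Fin.sum_univ_three]

theorem kernel_of_M (k : ℝ) (n : ℕ) (hk : k = (2 * n + 1) * Real.pi / 2) :
    ∀ v : Fin 3 → ℂ,
      (!![(1 : ℂ), -Real.cos k, 0;
          0, Real.cos k, -Real.cos k;
          Complex.I, Real.sin k, Real.sin k]).mulVec v = 0 ↔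
        ∃ c : ℂ, v = c • ![0, 1, -1] := by
  have hcos : Real.cos k = 0 := Real.cos_eq_zero_iff.mpr ⟨n, by rw [hk]; push_cast; ring⟩
  have hsin : (Real.sin k : ℂ) ≠ 0 := by
    rcases Real.cos_eq_zero_iff_sin_eq.mp hcos with h | h <;> simp [h]
  simp only [hcos, ofReal_zero, neg_zero]
  exact mulVec_eq_zero_iff_exists_smul hsin
end

section
/- Define ℛ(ε,k) = (cos k · cos(k(1+ε)) + i sin(k(2+ε)))/(cos k · cos(k(1+ε)) - i sin(k(2+ε))). Then for every μ ∈ ℝ, ℛ(ε, π/2 - ε(π/4) + ε²μ) converges, as ε → 0, to g(μ) = (π² + i(32μ - 4π))/(π² - i(32μ - 4π)). -/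
open Complex Real Filter

noncomputable def RR (ε k : ℝ) : ℂ :=
  ((Real.cos k * Real.cos (k * (1 + ε)) : ℂ) + Complex.I * Real.sin (k * (2 + ε))) /
  ((Real.cos k * Real.cos (k * (1 + ε)) : ℂ) - Complex.I * Real.sin (k * (2 + ε)))

/-!
Along the path `k = π/2 - επ/4 + ε²μ` the three trigonometric factors of `ℛ` vanish:
`cos k = sin (ε a)`, `cos (k(1+ε)) = -sin (ε b)` and `sin (k(2+ε)) = -sin (ε² c)`, with `a, b → π/4`
and `c → 2μ - π/4`. Both real quantities in `ℛ = (P + iQ)/(P - iQ)` are therefore of order `ε²`;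
since this quotient is unchanged when `P` and `Q` are scaled by a common nonzero factor, dividing
by `ε²` (written with `sinc` so as to stay continuous at `ε = 0`) gives the limit
`(P₀ + iQ₀)/(P₀ - iQ₀)` with `P₀ = -π²/16`, `Q₀ = π/4 - 2μ`, which is `g(μ)` after scaling by `-16`.
-/

noncomputable def quotConj (p q : ℝ) : ℂ := (p + I * q) / (p - I * q)

lemma RR_eq_quotConj (ε k : ℝ) :
    RR ε k = quotConj (Real.cos k * Real.cos (k * (1 + ε))) (Real.sin (k * (2 + ε))) := by
  simp only [RR, quotConj, ofReal_mul]

lemma quotConj_mul_mul {t : ℝ} (ht : t ≠ 0) (p q : ℝ) :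
    quotConj (t * p) (t * q) = quotConj p q := by
  have ht' : (t : ℂ) ≠ 0 := ofReal_ne_zero.mpr ht
  simp only [quotConj, ofReal_mul]
  rw [← mul_div_mul_left ((p : ℂ) + I * q) _ ht']
  congr 1 <;> ring

lemma sub_I_mul_ne_zero {p q : ℝ} (hpq : p ≠ 0 ∨ q ≠ 0) : (p : ℂ) - I * q ≠ 0 := by
  intro h
  rcases hpq with hp | hq
  · exact hp (by simpa using congrArg re h)
  · exact hq (by simpa using congrArg im h)

lemma Filter.Tendsto.quotConj {α : Type*} {l : Filter α} {P Q : α → ℝ} {p q : ℝ}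
    (hP : Tendsto P l (nhds p)) (hQ : Tendsto Q l (nhds q)) (hpq : p ≠ 0 ∨ q ≠ 0) :
    Tendsto (fun x => _root_.quotConj (P x) (Q x)) l (nhds (_root_.quotConj p q)) := by
  have hP' := (continuous_ofReal.tendsto p).comp hP
  have hQ' := ((continuous_ofReal.tendsto q).comp hQ).const_mul I
  exact (hP'.add hQ').div (hP'.sub hQ') (sub_I_mul_ne_zero hpq)

lemma sin_eq_mul_sinc (x : ℝ) : Real.sin x = x * sinc x := by
  rcases eq_or_ne x 0 with rfl | hx
  · simp
  · rw [sinc_of_ne_zero hx, mul_div_cancel₀ _ hx]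

section Path

variable (μ ε : ℝ)

lemma cos_path :
    Real.cos (π / 2 - ε * (π / 4) + ε ^ 2 * μ) = Real.sin (ε * (π / 4 - ε * μ)) := by
  rw [← Real.cos_pi_div_two_sub]
  ring_nf

lemma cos_path_mul_one_add :
    Real.cos ((π / 2 - ε * (π / 4) + ε ^ 2 * μ) * (1 + ε)) =
      -Real.sin (ε * (π / 4 + ε * (μ - π / 4) + ε ^ 2 * μ)) := by
  rw [← Real.cos_add_pi_div_two]
  ring_nf

lemma sin_path_mul_two_add :
    Real.sin ((π / 2 - ε * (π / 4) + ε ^ 2 * μ) * (2 + ε)) =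
      -Real.sin (ε ^ 2 * (2 * μ - π / 4 + ε * μ)) := by
  rw [← Real.sin_add_pi]
  ring_nf

/-- `cos k · cos (k(1+ε)) / ε²` along the path, continuous through `ε = 0`; likewise
`normalizedSin` is `sin (k(2+ε)) / ε²`. -/
noncomputable def normalizedCosProd : ℝ :=
  -((π / 4 - ε * μ) * sinc (ε * (π / 4 - ε * μ)) *
    ((π / 4 + ε * (μ - π / 4) + ε ^ 2 * μ) * sinc (ε * (π / 4 + ε * (μ - π / 4) + ε ^ 2 * μ))))

noncomputable def normalizedSin : ℝ :=
  -((2 * μ - π / 4 + ε * μ) * sinc (ε ^ 2 * (2 * μ - π / 4 + ε * μ)))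

lemma RR_path_eq (hε : ε ≠ 0) :
    RR ε (π / 2 - ε * (π / 4) + ε ^ 2 * μ) =
      quotConj (normalizedCosProd μ ε) (normalizedSin μ ε) := by
  rw [RR_eq_quotConj, cos_path, cos_path_mul_one_add, sin_path_mul_two_add,
    ← quotConj_mul_mul (pow_ne_zero 2 hε) (normalizedCosProd μ ε)]
  simp only [normalizedCosProd, normalizedSin, sin_eq_mul_sinc]
  congr 1 <;> ring

lemma continuous_normalizedCosProd : Continuous (normalizedCosProd μ) := by
  unfold normalizedCosProd
  fun_prop

lemma continuous_normalizedSin : Continuous (normalizedSin μ) := by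
  unfold normalizedSin
  fun_prop

end Path

theorem RR_tendsto_g (μ : ℝ) :
    Tendsto (fun ε : ℝ => RR ε (Real.pi / 2 - ε * (Real.pi / 4) + ε ^ 2 * μ))
      (nhdsWithin 0 {0}ᶜ)
      (nhds (((Real.pi ^ 2 : ℂ) + Complex.I * (32 * μ - 4 * Real.pi)) /
             ((Real.pi ^ 2 : ℂ) - Complex.I * (32 * μ - 4 * Real.pi)))) := by
  have hP₀ : normalizedCosProd μ 0 = -(π / 4) ^ 2 := by simp [normalizedCosProd, sq]
  have hQ₀ : normalizedSin μ 0 = -(2 * μ - π / 4) := by simp [normalizedSin]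
  have hlimit : quotConj (normalizedCosProd μ 0) (normalizedSin μ 0) =
      ((π ^ 2 : ℂ) + I * (32 * μ - 4 * π)) / ((π ^ 2 : ℂ) - I * (32 * μ - 4 * π)) := by
    rw [← quotConj_mul_mul (by norm_num : (-16 : ℝ) ≠ 0), hP₀, hQ₀, quotConj]
    push_cast
    ring
  have hP := tendsto_nhdsWithin_of_tendsto_nhds (s := {0}ᶜ)
    ((continuous_normalizedCosProd μ).tendsto 0)
  have hQ := tendsto_nhdsWithin_of_tendsto_nhds (s := {0}ᶜ)
    ((continuous_normalizedSin μ).tendsto 0)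
  rw [← hlimit]
  refine (hP.quotConj hQ (Or.inl (by rw [hP₀]; exact neg_ne_zero.mpr (by positivity)))).congr' ?_
  filter_upwards [self_mem_nhdsWithin] with ε hε using (RR_path_eq μ ε hε).symm
end

section
/- For every z₀ with |z₀| = 1 and z₀ ≠ -1, there exists μ ∈ ℝ and a path γ(ε) = (ε, π/2 - ε(π/4) + ε²μ) in ℝ² with γ(ε) → (0, π/2) as ε → 0, such that ℛ(γ(ε)) → z₀ as ε → 0. -/
open Complex Real Filter

/-!
Along `k = π/2 - ε π/4 + ε² μ` both cosines in `ℛ` vanish to first order and `sin (k (2 + ε))`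
to second order, with leading coefficients `π/4`, `-π/4` and `π/4 - 2μ`. Dividing numerator and
denominator by `ε²` shows `ℛ → g(μ) = (π² + i s)/(π² - i s)`, `s = 32μ - 4π`, and the Cayley
transform `s ↦ (π² + i s)/(π² - i s)` maps `ℝ` onto the unit circle minus `-1`.
-/

open Topology

theorem Real.tendsto_sin_mul_div {α : Type*} {l : Filter α} {g p : α → ℝ} {c : ℝ}
    (hg : Tendsto g l (𝓝 0)) (hg0 : ∀ᶠ x in l, g x ≠ 0) (hp : Tendsto p l (𝓝 c)) :
    Tendsto (fun x => Real.sin (g x * p x) / g x) l (𝓝 c) := by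
  have hsinc : Tendsto (fun x => p x * sinc (g x * p x)) l (𝓝 (c * sinc (0 * c))) :=
    hp.mul ((continuous_sinc.tendsto _).comp (hg.mul hp))
  rw [zero_mul, sinc_zero, mul_one] at hsinc
  refine hsinc.congr' ?_
  filter_upwards [hg0] with x hx
  by_cases hpx : p x = 0
  · simp [hpx]
  · rw [sinc_of_ne_zero (mul_ne_zero hx hpx)]
    field_simp

section ParabolicPath

variable (μ : ℝ)

theorem tendsto_cos_div :
    Tendsto (fun ε => Real.cos (π / 2 - ε * (π / 4) + ε ^ 2 * μ) / ε) (𝓝[≠] 0) (𝓝 (π / 4)) := by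
  have hp : Tendsto (fun ε : ℝ => π / 4 - ε * μ) (𝓝[≠] 0) (𝓝 (π / 4)) :=
    ((by fun_prop : Continuous fun ε : ℝ => π / 4 - ε * μ).tendsto' 0 _ (by simp)).mono_left
      nhdsWithin_le_nhds
  refine (Real.tendsto_sin_mul_div (g := fun ε => ε) (tendsto_id.mono_left nhdsWithin_le_nhds)
    self_mem_nhdsWithin hp).congr fun ε => ?_
  rw [← Real.cos_pi_div_two_sub]
  ring_nf

theorem tendsto_cos_mul_div :
    Tendsto (fun ε => Real.cos ((π / 2 - ε * (π / 4) + ε ^ 2 * μ) * (1 + ε)) / ε) (𝓝[≠] 0)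
      (𝓝 (-(π / 4))) := by
  have hp : Tendsto (fun ε : ℝ => π / 4 + ε * (μ - π / 4) + ε ^ 2 * μ) (𝓝[≠] 0) (𝓝 (π / 4)) :=
    ((by fun_prop : Continuous fun ε : ℝ => π / 4 + ε * (μ - π / 4) + ε ^ 2 * μ).tendsto' 0 _
      (by simp)).mono_left nhdsWithin_le_nhds
  refine (Real.tendsto_sin_mul_div (g := fun ε => ε) (tendsto_id.mono_left nhdsWithin_le_nhds)
    self_mem_nhdsWithin hp).neg.congr fun ε => ?_
  rw [← neg_div, ← Real.cos_add_pi_div_two]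
  ring_nf

theorem tendsto_sin_mul_div_sq :
    Tendsto (fun ε => Real.sin ((π / 2 - ε * (π / 4) + ε ^ 2 * μ) * (2 + ε)) / ε ^ 2) (𝓝[≠] 0)
      (𝓝 (π / 4 - 2 * μ)) := by
  have hp : Tendsto (fun ε : ℝ => 2 * μ - π / 4 + ε * μ) (𝓝[≠] 0) (𝓝 (2 * μ - π / 4)) :=
    ((by fun_prop : Continuous fun ε : ℝ => 2 * μ - π / 4 + ε * μ).tendsto' 0 _
      (by simp)).mono_left nhdsWithin_le_nhds
  have hsq : Tendsto (fun ε : ℝ => ε ^ 2) (𝓝[≠] 0) (𝓝 0) :=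
    ((continuous_pow 2).tendsto' 0 _ (by simp)).mono_left nhdsWithin_le_nhds
  have hsq0 : ∀ᶠ ε : ℝ in 𝓝[≠] 0, ε ^ 2 ≠ 0 := by
    filter_upwards [self_mem_nhdsWithin] with ε hε using pow_ne_zero 2 hε
  refine ((Real.tendsto_sin_mul_div hsq hsq0 hp).neg.congr fun ε => ?_).trans (by rw [neg_sub])
  rw [← neg_div, ← Real.sin_add_pi]
  ring_nf

theorem Complex.ofReal_sub_I_mul_ne_zero {c : ℝ} (hc : c ≠ 0) (s : ℝ) : (c : ℂ) - I * s ≠ 0 := by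
  intro h
  exact hc (by simpa using congrArg Complex.re h)

theorem RR_eq_div_sq {ε : ℝ} (hε : ε ≠ 0) (k : ℝ) :
    RR ε k =
      (((Real.cos k / ε * (Real.cos (k * (1 + ε)) / ε) : ℝ) : ℂ) +
          I * ((Real.sin (k * (2 + ε)) / ε ^ 2 : ℝ) : ℂ)) /
        (((Real.cos k / ε * (Real.cos (k * (1 + ε)) / ε) : ℝ) : ℂ) -
          I * ((Real.sin (k * (2 + ε)) / ε ^ 2 : ℝ) : ℂ)) := by
  have hε' : (ε : ℂ) ≠ 0 := ofReal_ne_zero.mpr hε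
  rw [RR]
  push_cast
  field_simp

theorem tendsto_RR :
    Tendsto (fun ε => RR ε (π / 2 - ε * (π / 4) + ε ^ 2 * μ)) (𝓝[≠] 0)
      (𝓝 ((π ^ 2 + I * (32 * μ - 4 * π : ℝ)) / (π ^ 2 - I * (32 * μ - 4 * π : ℝ)))) := by
  have hprod := ((tendsto_cos_div μ).mul (tendsto_cos_mul_div μ)).ofReal
  have hsin := (tendsto_sin_mul_div_sq μ).ofReal
  have hden : ((π / 4 * -(π / 4) : ℝ) : ℂ) - I * ((π / 4 - 2 * μ : ℝ) : ℂ) ≠ 0 :=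
    Complex.ofReal_sub_I_mul_ne_zero
      (mul_ne_zero (by positivity) (neg_ne_zero.mpr (by positivity))) _
  have hIsin := (tendsto_const_nhds (x := I)).mul hsin
  have hlim := (hprod.add hIsin).div (hprod.sub hIsin) hden
  have hg : (((π / 4 * -(π / 4) : ℝ) : ℂ) + I * ((π / 4 - 2 * μ : ℝ) : ℂ)) /
        (((π / 4 * -(π / 4) : ℝ) : ℂ) - I * ((π / 4 - 2 * μ : ℝ) : ℂ)) =
      (π ^ 2 + I * (32 * μ - 4 * π : ℝ)) / (π ^ 2 - I * (32 * μ - 4 * π : ℝ)) := by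
    rw [← mul_div_mul_left _ _ (by norm_num : (-16 : ℂ) ≠ 0)]
    push_cast
    ring_nf
  rw [← hg]
  refine hlim.congr' ?_
  filter_upwards [self_mem_nhdsWithin] with ε hε
  exact (RR_eq_div_sq hε _).symm

end ParabolicPath

theorem Complex.exists_div_eq_of_norm_eq_one {z : ℂ} (hz : ‖z‖ = 1) (hz' : z ≠ -1) {c : ℝ}
    (hc : c ≠ 0) : ∃ s : ℝ, (c + I * s) / (c - I * s) = z := by
  have hcircle : z.re ^ 2 + z.im ^ 2 = 1 := by
    have h := Complex.sq_norm z
    rw [hz, normSq_apply] at h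
    linarith
  have hre : 1 + z.re ≠ 0 := by
    intro h
    have him : z.im = 0 := by nlinarith
    exact hz' (Complex.ext (by simp only [neg_re, one_re]; linarith) (by simpa using him))
  -- `s = c tan (arg z / 2)`, written without the argument
  obtain ⟨s, hs⟩ : ∃ s : ℝ, s * (1 + z.re) = c * z.im := ⟨_, div_mul_cancel₀ _ hre⟩
  refine ⟨s, ?_⟩
  rw [div_eq_iff (Complex.ofReal_sub_I_mul_ne_zero hc _)]
  apply Complex.ext <;>
    simp only [add_re, add_im, sub_re, sub_im, mul_re, mul_im, ofReal_re, ofReal_im, I_re, I_im]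
  · refine mul_right_cancel₀ hre ?_
    linear_combination (-z.im) * hs - c * hcircle
  · linear_combination hs

theorem exists_path_to_any_point (z₀ : ℂ) (hz : ‖z₀‖ = 1) (hz' : z₀ ≠ -1) :
    ∃ μ : ℝ,
      Tendsto (fun ε : ℝ => ((ε, Real.pi / 2 - ε * (Real.pi / 4) + ε ^ 2 * μ) : ℝ × ℝ))
        (nhdsWithin 0 {0}ᶜ) (nhds (0, Real.pi / 2)) ∧
      Tendsto (fun ε : ℝ => RR ε (Real.pi / 2 - ε * (Real.pi / 4) + ε ^ 2 * μ))
        (nhdsWithin 0 {0}ᶜ) (nhds z₀) := by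
  obtain ⟨s, hs⟩ := Complex.exists_div_eq_of_norm_eq_one hz hz' (pow_ne_zero 2 pi_ne_zero)
  refine ⟨(s + 4 * π) / 32, ?_, ?_⟩
  · exact ((by fun_prop : Continuous fun ε : ℝ =>
      ((ε, π / 2 - ε * (π / 4) + ε ^ 2 * ((s + 4 * π) / 32)) : ℝ × ℝ)).tendsto' 0 _
      (by simp)).mono_left nhdsWithin_le_nhds
  · convert tendsto_RR ((s + 4 * π) / 32) using 2
    rw [← hs]
    push_cast
    ring_nf
end

section
/- Let S be an (m+1)×(m+1) complex unitary symmetric matrix indexed by 0,…,m with S_{mm} ≠ -1. Then the m×m matrix 𝔰 = S_{••} - S_{•m}(1 + S_{mm})^{-1} S_{m•}, where S_{••} is the upper-left m×m block, S_{•m} the last column without its last entry, and S_{m•} = S_{•m}ᵀ, is unitary and symmetric. -/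
/-!
Write `S = [[B, c], [cᵀ, d]]`. Unitarity of `S` gives `B Bᴴ = 1 - c c̄ᵀ`, `B c̄ = -d̄ c` and
`cᵀ c̄ = 1 - d d̄`, so every term of `𝔰 𝔰ᴴ - 1` is a scalar multiple of `c c̄ᵀ`; with
`a = (1 + d)⁻¹` the coefficients add up to
`-1 + a d + ā d̄ + a ā (1 - d d̄) = 0`.
Symmetry of `𝔰` is inherited from that of `B` and of `c cᵀ`.
-/

open Matrix

section Blocks

variable {K : Type*} [CommSemiring K] [StarRing K] {m : ℕ}
  {S : Matrix (Fin (m + 1)) (Fin (m + 1)) K}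

theorem Matrix.mul_conjTranspose_apply_eq_sum_castSucc_add (i j : Fin (m + 1)) :
    (S * Sᴴ) i j = ∑ k : Fin m, S i k.castSucc * star (S j k.castSucc)
      + S i (Fin.last m) * star (S j (Fin.last m)) := by
  rw [mul_apply, Fin.sum_univ_castSucc]
  rfl

theorem Matrix.submatrix_castSucc_mul_conjTranspose_add_vecMulVec_eq_one (hU : S * Sᴴ = 1) :
    let B := S.submatrix Fin.castSucc Fin.castSucc
    let c := fun i : Fin m => S i.castSucc (Fin.last m)
    B * Bᴴ + vecMulVec c (star c) = 1 := by
  intro B c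
  ext i j
  have := congr_fun₂ hU i.castSucc j.castSucc
  rw [mul_conjTranspose_apply_eq_sum_castSucc_add] at this
  simpa [mul_apply, vecMulVec_apply, one_apply, B, c] using this

theorem Matrix.submatrix_castSucc_mulVec_star_add_smul_eq_zero (hU : S * Sᴴ = 1)
    (hSym : S = Sᵀ) :
    let B := S.submatrix Fin.castSucc Fin.castSucc
    let c := fun i : Fin m => S i.castSucc (Fin.last m)
    B *ᵥ star c + star (S (Fin.last m) (Fin.last m)) • c = 0 := by
  intro B c
  ext i
  have := congr_fun₂ hU i.castSucc (Fin.last m)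
  have hlast (k : Fin m) : S (Fin.last m) k.castSucc = c k := congr_fun₂ hSym _ _
  rw [mul_conjTranspose_apply_eq_sum_castSucc_add, one_apply_ne (Fin.castSucc_lt_last i).ne]
    at this
  simpa [mulVec, dotProduct, hlast, B, c, mul_comm] using this

theorem Matrix.dotProduct_star_add_mul_star_eq_one (hU : S * Sᴴ = 1) (hSym : S = Sᵀ) :
    let c := fun i : Fin m => S i.castSucc (Fin.last m)
    c ⬝ᵥ star c + S (Fin.last m) (Fin.last m) * star (S (Fin.last m) (Fin.last m)) = 1 := by
  intro c
  have := congr_fun₂ hU (Fin.last m) (Fin.last m)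
  have hlast (k : Fin m) : S (Fin.last m) k.castSucc = c k := congr_fun₂ hSym _ _
  rw [mul_conjTranspose_apply_eq_sum_castSucc_add, one_apply_eq] at this
  simpa [dotProduct, hlast] using this

end Blocks

theorem Matrix.sub_smul_vecMulVec_mul_conjTranspose_eq_one {K n : Type*} [Field K] [StarRing K]
    [Fintype n] [DecidableEq n] {B : Matrix n n K} {c : n → K} {d : K}
    (hBB : B * Bᴴ + vecMulVec c (star c) = 1) (hBc : B *ᵥ star c + star d • c = 0)
    (hcc : c ⬝ᵥ star c + d * star d = 1) (hd : 1 + d ≠ 0) :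
    (B - (1 + d)⁻¹ • vecMulVec c c) * (B - (1 + d)⁻¹ • vecMulVec c c)ᴴ = 1 := by
  have hd' : 1 + star d ≠ 0 := by
    simpa using (star_ne_zero (R := K)).2 hd
  have hBc' : B *ᵥ star c = -(star d • c) := eq_neg_of_add_eq_zero_left hBc
  have hcB : c ᵥ* Bᴴ = -(d • star c) := by
    rw [vecMul_conjTranspose, hBc', star_neg, star_smul, star_star]
  have hcoef : (1 + d)⁻¹ * d + (1 + star d)⁻¹ * star d
      + (1 + d)⁻¹ * (1 + star d)⁻¹ * (1 - d * star d) = 1 := by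
    field_simp
    ring
  simp only [conjTranspose_sub, conjTranspose_smul, conjTranspose_vecMulVec, sub_mul, mul_sub,
    Matrix.mul_smul, Matrix.smul_mul]
  rw [vecMulVec_mul_vecMulVec, mul_vecMulVec, vecMulVec_mul, hBc', hcB, eq_sub_of_add_eq hcc,
    eq_sub_of_add_eq hBB]
  simp only [star_inv₀, star_add, star_one, neg_vecMulVec, vecMulVec_neg, smul_vecMulVec,
    vecMulVec_smul]
  linear_combination (norm := module) hcoef • vecMulVec c (star c)

theorem reduced_scattering_unitary_symmetric (m : ℕ)
    (S : Matrix (Fin (m + 1)) (Fin (m + 1)) ℂ)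
    (hU : S * Sᴴ = 1) (hSym : S = Sᵀ)
    (h : S (Fin.last m) (Fin.last m) ≠ -1) :
    let B : Matrix (Fin m) (Fin m) ℂ := fun i j => S i.castSucc j.castSucc
    let c : Fin m → ℂ := fun i => S i.castSucc (Fin.last m)
    let s : Matrix (Fin m) (Fin m) ℂ :=
      B - (1 + S (Fin.last m) (Fin.last m))⁻¹ • Matrix.vecMulVec c c
    s * sᴴ = 1 ∧ s = sᵀ := by
  intro B c s
  have hd : 1 + S (Fin.last m) (Fin.last m) ≠ 0 := fun h0 => h (eq_neg_of_add_eq_zero_right h0)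
  have hB : Bᵀ = B := by
    ext i j
    exact congr_fun₂ hSym.symm i.castSucc j.castSucc
  refine ⟨sub_smul_vecMulVec_mul_conjTranspose_eq_one
    (submatrix_castSucc_mul_conjTranspose_add_vecMulVec_eq_one hU)
    (submatrix_castSucc_mulVec_star_add_smul_eq_zero hU hSym)
    (dotProduct_star_add_mul_star_eq_one hU hSym) hd, ?_⟩
  simp only [s, transpose_sub, transpose_smul, transpose_vecMulVec, hB]
end
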